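/- arXiv:1509.07173 — 3 statements merged into one kernel-verified Lean document; each statement's English description precedes it below -/
import Mathlib

section
/- Every Polish diversity (𝕌, δ_𝕌) with the extension property is a universal Polish diversity: for every separable diversity (X, δ) there exists a map φ : X → 𝕌 with δ_𝕌(φ(A)) = δ(A) for all finite A ⊆ X. -/
open scoped Classical

/-- A diversity on `X`: a real-valued function on finite subsets satisfying
(D1) nonnegativity with `δ A = 0 ↔ |A| ≤ 1`, and (D2) the triangle inequality. -/
structure Diversity (X : Type*) where
  δ : Finset X → ℝ
  nonneg : ∀ A : Finset X, 0 ≤ δ A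
  eq_zero_iff : ∀ A : Finset X, δ A = 0 ↔ A.card ≤ 1
  triangle : ∀ A B C : Finset X, B.Nonempty → δ (A ∪ C) ≤ δ (A ∪ B) + δ (B ∪ C)

/-- An admissible function on a diversity (a one-point extension). -/
structure IsAdmissible {X : Type*} (D : Diversity X) (f : Finset X → ℝ) : Prop where
  empty : f ∅ = 0
  le : ∀ A : Finset X, D.δ A ≤ f A
  tri : ∀ A B C : Finset X, C.Nonempty → f (A ∪ B) ≤ f (A ∪ C) + D.δ (B ∪ C)
  subadd : ∀ A B : Finset X, f (A ∪ B) ≤ f A + f B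

/-- Restriction of a diversity to a subset. -/
noncomputable def Diversity.restrict {X : Type*} (D : Diversity X) (S : Set X) : Diversity S where
  δ A := D.δ (A.image Subtype.val)
  nonneg A := D.nonneg _
  eq_zero_iff A := by
    rw [D.eq_zero_iff, Finset.card_image_of_injective _ Subtype.val_injective]
  triangle A B C hB := by
    have h := D.triangle (A.image Subtype.val) (B.image Subtype.val) (C.image Subtype.val)
      (hB.image _)
    simpa [Finset.image_union] using h

/-- Separability of the induced metric `d a b = δ {a, b}`. -/
def Diversity.SeparableD {X : Type*} (D : Diversity X) : Prop :=
  ∃ s : Set X, s.Countable ∧ ∀ x : X, ∀ ε : ℝ, 0 < ε → ∃ y ∈ s, D.δ {x, y} < ε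

/-- Completeness of the induced metric `d a b = δ {a, b}`. -/
def Diversity.CompleteD {X : Type*} (D : Diversity X) : Prop :=
  ∀ u : ℕ → X, (∀ ε : ℝ, 0 < ε → ∃ N : ℕ, ∀ m ≥ N, ∀ n ≥ N, D.δ {u m, u n} < ε) →
    ∃ x : X, ∀ ε : ℝ, 0 < ε → ∃ N : ℕ, ∀ n ≥ N, D.δ {u n, x} < ε

/-- The diversity `δ̂` on (finite sets of) admissible functions. -/
noncomputable def hatδ {X : Type*} (F : Finset (Finset X → ℝ)) : ℝ :=
  if F.card ≤ 1 then 0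
  else sSup { r : ℝ | ∃ j ∈ F, ∃ A : (Finset X → ℝ) → Finset X,
    r = j ((F.erase j).biUnion A) - ∑ i ∈ F.erase j, i (A i) }

/-- The canonical maximal extension `f_S^X` of an admissible function on `S ⊆ X`. -/
noncomputable def extFun {X : Type*} (D : Diversity X) (S : Set X) (f : Finset S → ℝ)
    (A : Finset X) : ℝ :=
  sInf { r : ℝ | ∃ (B : Finset S) (As : S → Finset X),
    B.biUnion As = A ∧ r = f B + ∑ b ∈ B, D.δ (insert (b : X) (As b)) }

/-- An admissible function is finitely supported if it is the canonical extension
of an admissible function on some finite nonempty `S ⊆ X`. -/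
def FinitelySupported {X : Type*} (D : Diversity X) (f : Finset X → ℝ) : Prop :=
  ∃ S : Set X, S.Finite ∧ S.Nonempty ∧ ∃ g : Finset S → ℝ,
    IsAdmissible (D.restrict S) g ∧ f = extFun D S g

/-- The extension property for a diversity. -/
def Diversity.ExtensionProp {X : Type*} (D : Diversity X) : Prop :=
  ∀ F : Finset X, ∀ f : Finset ((F : Set X)) → ℝ,
    IsAdmissible (D.restrict (F : Set X)) f →
    ∃ x : X, ∀ A : Finset ((F : Set X)), D.δ (insert x (A.image Subtype.val)) = f A

/-- The approximate extension property for a diversity. -/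
def Diversity.ApproxExtensionProp {X : Type*} (D : Diversity X) : Prop :=
  ∀ F : Finset X, ∀ f : Finset ((F : Set X)) → ℝ,
    IsAdmissible (D.restrict (F : Set X)) f →
    ∀ ε : ℝ, 0 < ε →
      ∃ x : X, ∀ A : Finset ((F : Set X)), |D.δ (insert x (A.image Subtype.val)) - f A| ≤ ε

/-- Ultrahomogeneity: isomorphisms between finite subsets extend to automorphisms. -/
def Diversity.Ultrahomogeneous {X : Type*} (D : Diversity X) : Prop :=
  ∀ (A A' : Finset X) (φ : ((A : Set X)) → ((A' : Set X))), Function.Bijective φ →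
    (∀ B : Finset ((A : Set X)),
      D.δ (B.image (fun b => (φ b : X))) = D.δ (B.image Subtype.val)) →
    ∃ Φ : X → X, Function.Bijective Φ ∧ (∀ C : Finset X, D.δ (C.image Φ) = D.δ C) ∧
      ∀ a : ((A : Set X)), Φ a = (φ a : X)

/-! Enumerate a dense sequence `u` of `X`. For a finite configuration in `U` that copies one of
`X`, adding a point `x ∈ X` to the copied configuration gives an admissible function on it, so
the extension property realises it in `U`. Choosing `v 0, v 1, …` in turn this way, `v` and `u`
have the same diversity on every finite set of indices. For `x ∈ X` take `u (m k) → x`; then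
`v (m k)` is Cauchy and `φ x` is its limit in the complete `U`. Since moving the points of a
finite set changes its diversity by at most the total displacement, `φ` preserves `δ`. -/

namespace Diversity

variable {X : Type*} (D : Diversity X)

@[simp]
theorem δ_empty : D.δ ∅ = 0 := (D.eq_zero_iff ∅).2 (by simp)

@[simp]
theorem δ_singleton (x : X) : D.δ {x} = 0 := (D.eq_zero_iff _).2 (by simp)

theorem eq_of_δ_pair_eq_zero {x y : X} (h : D.δ {x, y} = 0) : x = y :=
  Finset.card_le_one.1 ((D.eq_zero_iff _).1 h) x (by simp) y (by simp)

theorem δ_pair_comm (x y : X) : D.δ {x, y} = D.δ {y, x} := by rw [Finset.pair_comm]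

theorem δ_pair_le (x y z : X) : D.δ {x, z} ≤ D.δ {x, y} + D.δ {y, z} := by
  simpa [← Finset.insert_eq] using D.triangle {x} {y} {z} (Finset.singleton_nonempty y)

theorem δ_le_δ_insert (A : Finset X) (x : X) : D.δ A ≤ D.δ (insert x A) := by
  simpa [← Finset.insert_eq] using D.triangle A {x} ∅ (Finset.singleton_nonempty x)

theorem δ_insert_le (A : Finset X) (x y : X) :
    D.δ (insert x A) ≤ D.δ (insert y A) + D.δ {x, y} := by
  have h := D.triangle A {y} {x} (Finset.singleton_nonempty y)
  rw [Finset.union_comm A, Finset.union_comm A, ← Finset.insert_eq, ← Finset.insert_eq,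
    ← Finset.insert_eq, δ_pair_comm] at h
  exact h

theorem δ_union_image_le {ι : Type*} (f g : ι → X) (A : Finset ι) (T : Finset X) :
    D.δ (T ∪ A.image f) ≤ D.δ (T ∪ A.image g) + ∑ i ∈ A, D.δ {f i, g i} := by
  induction A using Finset.induction_on generalizing T with
  | empty => simp
  | insert a A ha ih =>
    rw [Finset.image_insert, Finset.image_insert, Finset.sum_insert ha, Finset.union_insert,
      Finset.union_insert]
    have h₁ := D.δ_insert_le (T ∪ A.image f) (f a) (g a)
    have h₂ := ih (insert (g a) T)
    rw [Finset.insert_union, Finset.insert_union] at h₂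
    linarith

theorem abs_δ_image_sub_le {ι : Type*} (f g : ι → X) (A : Finset ι) :
    |D.δ (A.image f) - D.δ (A.image g)| ≤ ∑ i ∈ A, D.δ {f i, g i} := by
  have h₁ := D.δ_union_image_le f g A ∅
  have h₂ := D.δ_union_image_le g f A ∅
  simp only [Finset.empty_union, D.δ_pair_comm (g _)] at h₁ h₂
  exact abs_sub_le_iff.2 ⟨by linarith, by linarith⟩

theorem isAdmissible_δ_insert (x : X) : IsAdmissible D (fun A => D.δ (insert x A)) where
  empty := D.δ_singleton x
  le A := D.δ_le_δ_insert A x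
  tri A B C hC := by
    simpa [Finset.insert_union, Finset.union_comm C B] using
      D.triangle (insert x A) C B hC
  subadd A B := by
    simpa [Finset.insert_union, ← Finset.insert_eq] using
      D.triangle (insert x A) {x} B (Finset.singleton_nonempty x)

end Diversity

theorem IsAdmissible.comp {X Y : Type*} {D : Diversity X} {D' : Diversity Y}
    {f : Finset X → ℝ} (hf : IsAdmissible D f) (P : Finset Y → Finset X)
    (hP_empty : P ∅ = ∅) (hP_union : ∀ A B, P (A ∪ B) = P A ∪ P B)
    (hP_nonempty : ∀ A, A.Nonempty → (P A).Nonempty) (hδ : ∀ A, D'.δ A = D.δ (P A)) :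
    IsAdmissible D' (f ∘ P) where
  empty := by simp [hP_empty, hf.empty]
  le A := by simpa [hδ] using hf.le (P A)
  tri A B C hC := by
    simpa [hP_union, hδ] using hf.tri (P A) (P B) (P C) (hP_nonempty C hC)
  subadd A B := by simpa [hP_union] using hf.subadd (P A) (P B)

theorem Diversity.ExtensionProp.exists_insert {U X ι : Type*} {DU : Diversity U}
    (he : DU.ExtensionProp) (D : Diversity X) (a : ι → X) (b : ι → U) (I : Finset ι)
    (hI : ∀ S ⊆ I, DU.δ (S.image b) = D.δ (S.image a)) (x : X) :
    ∃ y : U, ∀ S ⊆ I, DU.δ (insert y (S.image b)) = D.δ (insert x (S.image a)) := by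
  have hab : ∀ i ∈ I, ∀ j ∈ I, b i = b j → a i = a j := fun i hi j hj h =>
    D.eq_of_δ_pair_eq_zero <| by
      simpa [h] using (hI {i, j} (by simp [Finset.insert_subset_iff, hi, hj])).symm
  set F := I.image b
  -- `Q B` is the set of indices lying over `B`; `hab` makes `a` constant on each fibre
  let Q : Finset (F : Set U) → Finset ι := fun B => I.filter (b · ∈ B.image Subtype.val)
  have hQ_image : ∀ B, (Q B).image b = B.image Subtype.val := by
    intro B
    ext y
    simp only [Finset.mem_image, Finset.mem_filter, Q]
    constructor
    · rintro ⟨i, ⟨-, hi⟩, rfl⟩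
      exact hi
    · rintro ⟨c, hc, rfl⟩
      obtain ⟨i, hi, hbi⟩ := Finset.mem_image.1 (Finset.mem_coe.1 c.2)
      exact ⟨i, ⟨hi, c, hc, hbi.symm⟩, hbi⟩
  have hQ_nonempty : ∀ B : Finset (F : Set U), B.Nonempty → (Q B).Nonempty := fun B hB =>
    Finset.image_nonempty.1 (hQ_image B ▸ hB.image _)
  obtain ⟨y, hy⟩ := he F (fun B => D.δ (insert x ((Q B).image a)))
    ((D.isAdmissible_δ_insert x).comp (fun B => (Q B).image a) (by simp [Q])
      (fun A B => by
        rw [← Finset.image_union]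
        congr 1
        ext i
        simp [Q, exists_or, and_or_left])
      (fun B hB => (hQ_nonempty B hB).image a)
      (fun B => by
        show DU.δ _ = _
        rw [← hQ_image, hI _ (Finset.filter_subset _ _)]))
  refine ⟨y, fun S hS => ?_⟩
  let B : Finset (F : Set U) := (S.image b).subtype (· ∈ (F : Set U))
  have hB : B.image Subtype.val = S.image b := by
    have h : ∀ y ∈ S.image b, y ∈ (F : Set U) := fun y hy =>
      Finset.mem_coe.2 (Finset.image_subset_image hS hy)
    simpa [Finset.map_eq_image] using Finset.subtype_map_of_mem h
  have hQB : (Q B).image a = S.image a := by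
    simp only [Q, hB]
    ext z
    simp only [Finset.mem_image, Finset.mem_filter]
    constructor
    · rintro ⟨i, ⟨hi, j, hj, hbj⟩, rfl⟩
      exact ⟨j, hj, hab j (hS hj) i hi hbj⟩
    · rintro ⟨j, hj, rfl⟩
      exact ⟨j, ⟨hS hj, j, hj, rfl⟩, rfl⟩
  rw [← hB, hy B, hQB]

theorem exists_forall_of_update_step {α : Type*} (Q : ℕ → (ℕ → α) → Prop)
    (hQ : ∀ n g g', (∀ i < n, g i = g' i) → Q n g → Q n g') (g₀ : ℕ → α) (h₀ : Q 0 g₀)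
    (hstep : ∀ n g, Q n g → ∃ y, Q (n + 1) (Function.update g n y)) :
    ∃ v : ℕ → α, ∀ n, Q n v := by
  have hstep' : ∀ n g, ∃ y, Q n g → Q (n + 1) (Function.update g n y) := fun n g =>
    if h : Q n g then (hstep n g h).imp fun _ hy _ => hy else ⟨g n, fun h' => (h h').elim⟩
  choose next hnext using hstep'
  let G : ℕ → ℕ → α := fun n => Nat.rec g₀ (fun n g => Function.update g n (next n g)) n
  have hG : ∀ n, Q n (G n) := fun n => by
    induction n with
    | zero => exact h₀
    | succ n ih => exact hnext n (G n) ih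
  have hG_stable : ∀ n, ∀ i < n, G n i = G (i + 1) i := fun n => by
    induction n with
    | zero => simp
    | succ n ih =>
      intro i hi
      rcases Nat.lt_succ_iff_lt_or_eq.1 hi with hi | rfl
      · exact (Function.update_of_ne hi.ne _ _).trans (ih i hi)
      · rfl
  exact ⟨fun i => G (i + 1) i, fun n => hQ n (G n) _ (hG_stable n) (hG n)⟩

theorem Diversity.ExtensionProp.exists_seq_image_eq {U X : Type*} {DU : Diversity U}
    (he : DU.ExtensionProp) (D : Diversity X) (u : ℕ → X) :
    ∃ v : ℕ → U, ∀ S : Finset ℕ, DU.δ (S.image v) = D.δ (S.image u) := by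
  -- extending the empty configuration shows that `U` is nonempty
  obtain ⟨y₀, -⟩ := he.exists_insert D (ι := Empty) Empty.elim Empty.elim ∅
    (fun S hS => by simp [Finset.subset_empty.1 hS]) (u 0)
  let Q : ℕ → (ℕ → U) → Prop := fun n g =>
    ∀ S ⊆ Finset.range n, DU.δ (S.image g) = D.δ (S.image u)
  have hQ : ∀ n g g', (∀ i < n, g i = g' i) → Q n g → Q n g' := fun n g g' hgg' hg S hS => by
    rw [← hg S hS, Finset.image_congr fun i hi => (hgg' i (Finset.mem_range.1 (hS hi))).symm]
  obtain ⟨v, hv⟩ := exists_forall_of_update_step Q hQ (fun _ => y₀)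
    (fun S hS => by simp [Finset.subset_empty.1 hS]) fun n g hg => by
      obtain ⟨y, hy⟩ := he.exists_insert D u g (Finset.range n) hg (u n)
      refine ⟨y, fun S hS => ?_⟩
      have hS' : S.erase n ⊆ Finset.range n := fun i hi => by
        have := Finset.mem_range.1 (hS (Finset.mem_of_mem_erase hi))
        exact Finset.mem_range.2 (by have := Finset.ne_of_mem_erase hi; omega)
      have h_erase : (S.erase n).image (Function.update g n y) = (S.erase n).image g :=
        Finset.image_congr fun i hi => Function.update_of_ne (Finset.ne_of_mem_erase hi) _ _
      by_cases hn : n ∈ S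
      · rw [← Finset.insert_erase hn, Finset.image_insert, Finset.image_insert, h_erase,
          Function.update_self, hy _ hS']
      · rw [← Finset.erase_eq_of_notMem hn, h_erase, hg _ hS']
  exact ⟨v, fun S => hv _ S (Finset.subset_range_sup_succ S)⟩

namespace Diversity

open Filter Topology

variable {X : Type*} (D : Diversity X)

def ConvergesTo (w : ℕ → X) (x : X) : Prop :=
  ∀ ε : ℝ, 0 < ε → ∃ N : ℕ, ∀ n ≥ N, D.δ {w n, x} < ε

def IsCauchy (w : ℕ → X) : Prop :=
  ∀ ε : ℝ, 0 < ε → ∃ N : ℕ, ∀ m ≥ N, ∀ n ≥ N, D.δ {w m, w n} < ε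

variable {D}

theorem convergesTo_iff_tendsto {w : ℕ → X} {x : X} :
    D.ConvergesTo w x ↔ Tendsto (fun n => D.δ {w n, x}) atTop (𝓝 0) := by
  simp [ConvergesTo, Metric.tendsto_atTop, abs_of_nonneg (D.nonneg _)]

theorem ConvergesTo.isCauchy {w : ℕ → X} {x : X} (h : D.ConvergesTo w x) : D.IsCauchy w := by
  intro ε hε
  obtain ⟨N, hN⟩ := h (ε / 2) (half_pos hε)
  refine ⟨N, fun m hm n hn => ?_⟩
  have := D.δ_pair_le (w m) x (w n)
  rw [D.δ_pair_comm x] at this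
  linarith [hN m hm, hN n hn]

theorem SeparableD.exists_seq_convergesTo [Nonempty X] (h : D.SeparableD) :
    ∃ u : ℕ → X, ∀ x, ∃ m : ℕ → ℕ, D.ConvergesTo (fun k => u (m k)) x := by
  obtain ⟨s, hs, hdense⟩ := h
  obtain ⟨u, rfl⟩ := hs.exists_eq_range <| by
    obtain ⟨y, hy, -⟩ := hdense (Classical.arbitrary X) 1 one_pos
    exact ⟨y, hy⟩
  refine ⟨u, fun x => ?_⟩
  have hdense' : ∀ ε : ℝ, 0 < ε → ∃ k, D.δ {u k, x} < ε := fun ε hε => by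
    obtain ⟨_, ⟨k, rfl⟩, hk⟩ := hdense x ε hε
    exact ⟨k, by rwa [δ_pair_comm]⟩
  choose m hm using fun k : ℕ => hdense' (1 / (k + 1)) Nat.one_div_pos_of_nat
  exact ⟨m, convergesTo_iff_tendsto.2 <| squeeze_zero (fun k => D.nonneg _) (fun k => (hm k).le)
    tendsto_one_div_add_atTop_nhds_zero_nat⟩

theorem tendsto_δ_image {ι : Type*} {A : Finset ι} {g : ι → X} {w : ℕ → ι → X}
    (h : ∀ i ∈ A, D.ConvergesTo (w · i) (g i)) :
    Tendsto (fun k => D.δ (A.image (w k))) atTop (𝓝 (D.δ (A.image g))) := by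
  rw [tendsto_iff_norm_sub_tendsto_zero]
  refine squeeze_zero (fun k => norm_nonneg _) (fun k => D.abs_δ_image_sub_le _ _ A) ?_
  simpa using tendsto_finsetSum A fun i hi => convergesTo_iff_tendsto.1 (h i hi)

end Diversity

theorem Diversity.CompleteD.exists_image_eq {X U : Type*} {D : Diversity X} {DU : Diversity U}
    (hc : DU.CompleteD) {u : ℕ → X}
    (hu : ∀ x, ∃ m : ℕ → ℕ, D.ConvergesTo (fun k => u (m k)) x) {v : ℕ → U}
    (hv : ∀ S : Finset ℕ, DU.δ (S.image v) = D.δ (S.image u)) :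
    ∃ φ : X → U, ∀ A : Finset X, DU.δ (A.image φ) = D.δ A := by
  choose m hm using hu
  have hv_pair : ∀ i j, DU.δ {v i, v j} = D.δ {u i, u j} := fun i j => by simpa using hv {i, j}
  have hcauchy : ∀ x, DU.IsCauchy fun k => v (m x k) := fun x ε hε => by
    simpa only [hv_pair] using (hm x).isCauchy ε hε
  choose φ hφ using fun x => hc _ (hcauchy x)
  refine ⟨φ, fun A => tendsto_nhds_unique ?_ (by simpa using tendsto_δ_image fun a _ => hm a)⟩
  refine (tendsto_δ_image fun a _ => hφ a).congr fun k => ?_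
  simpa only [Finset.image_image, Function.comp_def] using hv (A.image (m · k))

theorem stmt15_general {U : Type*} (DU : Diversity U)
    (hc : DU.CompleteD) (he : DU.ExtensionProp)
    {X : Type*} (D : Diversity X) (hXs : D.SeparableD) :
    ∃ φ : X → U, ∀ A : Finset X, DU.δ (A.image φ) = D.δ A := by
  cases isEmpty_or_nonempty X
  · exact ⟨isEmptyElim, fun A => by simp [Finset.eq_empty_of_isEmpty A]⟩
  obtain ⟨u, hu⟩ := hXs.exists_seq_convergesTo
  obtain ⟨v, hv⟩ := he.exists_seq_image_eq D u
  exact hc.exists_image_eq hu hv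

/-- Every Polish diversity with the extension property is universal: every
separable diversity embeds into it. -/
theorem stmt15 {U : Type*} (DU : Diversity U)
    (hs : DU.SeparableD) (hc : DU.CompleteD) (he : DU.ExtensionProp)
    {X : Type*} (D : Diversity X) (hXs : D.SeparableD) :
    ∃ φ : X → U, ∀ A : Finset X, DU.δ (A.image φ) = D.δ A :=
  stmt15_general DU hc he D hXs
end

section
/- Let (X, δ) be a Polish diversity that is ultrahomogeneous and universal. Then (X, δ) has the extension property. (Consequently, by uniqueness, it is isomorphic to the Urysohn diversity.) -/
open scoped Classical

section AuxStmt17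

open Finset

variable {X : Type*}

lemma eraseNone_card_of_notMem {α : Type*} {S : Finset (Option α)} (h : none ∉ S) :
    S.eraseNone.card = S.card := by
  have h1 := Finset.image_some_eraseNone S
  rw [Finset.erase_eq_of_notMem h] at h1
  calc S.eraseNone.card = (S.eraseNone.image some).card :=
        (Finset.card_image_of_injective _ (Option.some_injective _)).symm
    _ = S.card := by rw [h1]

lemma admissible_key {D : Diversity X} {f : Finset X → ℝ} (hf : IsAdmissible D f)
    (A B C : Finset X) : f (A ∪ C) ≤ f (A ∪ B) + f (B ∪ C) := by
  rcases B.eq_empty_or_nonempty with h | h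
  · subst h
    simpa using hf.subadd A C
  · calc f (A ∪ C) ≤ f (A ∪ B) + D.δ (C ∪ B) := hf.tri A C B h
      _ ≤ f (A ∪ B) + f (C ∪ B) := by
          have := hf.le (C ∪ B); linarith
      _ = f (A ∪ B) + f (B ∪ C) := by rw [Finset.union_comm C B]

/-- One-point extension of a diversity by an admissible function. -/
noncomputable def extDiv (D : Diversity X) (F : Finset X)
    (f : Finset ((F : Set X)) → ℝ) (hf : IsAdmissible (D.restrict (F : Set X)) f)
    (hpos : ∀ a : ((F : Set X)), 0 < f {a}) :
    Diversity (Option ((F : Set X))) where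
  δ S := if none ∈ S then f S.eraseNone else (D.restrict (F : Set X)).δ S.eraseNone
  nonneg S := by
    beta_reduce
    split
    · exact le_trans ((D.restrict _).nonneg _) (hf.le _)
    · exact (D.restrict _).nonneg _
  eq_zero_iff S := by
    beta_reduce
    split
    · next hn =>
      constructor
      · intro h0
        have hS0 : S.eraseNone = ∅ := by
          by_contra hne
          obtain ⟨a, ha⟩ := Finset.nonempty_of_ne_empty hne
          have hd0 : (D.restrict (F : Set X)).δ S.eraseNone = 0 :=
            le_antisymm (le_of_le_of_eq (hf.le _) h0) ((D.restrict _).nonneg _)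
          have hcard : S.eraseNone.card ≤ 1 := ((D.restrict _).eq_zero_iff _).1 hd0
          have hsing : S.eraseNone = {a} :=
            Finset.eq_singleton_iff_unique_mem.2
              ⟨ha, fun b hb => Finset.card_le_one.1 hcard b hb a ha⟩
          rw [hsing] at h0
          exact absurd h0 (ne_of_gt (hpos a))
        have hc : S.erase none = ∅ := by
          have h := Finset.image_some_eraseNone S
          rw [hS0] at h; simpa using h.symm
        have h4 := Finset.card_erase_of_mem hn
        rw [hc, Finset.card_empty] at h4
        have h5 : 0 < S.card := Finset.card_pos.2 ⟨none, hn⟩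
        omega
      · intro h1
        have hS0 : S.eraseNone = ∅ := by
          by_contra hne
          obtain ⟨a, ha⟩ := Finset.nonempty_of_ne_empty hne
          have h2 : 1 < S.card := Finset.one_lt_card.2
            ⟨none, hn, some a, Finset.mem_eraseNone.1 ha, by simp⟩
          omega
        rw [hS0]; exact hf.empty
    · next hn =>
      rw [(D.restrict _).eq_zero_iff, eraseNone_card_of_notMem hn]
  triangle A B C hB := by
    have eO : (fun (a b : Option ((F : Set X))) => Classical.propDecidable (a = b))
        = (inferInstance : DecidableEq (Option ((F : Set X)))) := by
      funext a b; exact Subsingleton.elim _ _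
    have eS : (fun (a b : ((F : Set X))) => Classical.propDecidable (a = b))
        = (inferInstance : DecidableEq ((F : Set X))) := by
      funext a b; exact Subsingleton.elim _ _
    beta_reduce
    rw [eO]
    set A₀ := A.eraseNone with hA₀
    set B₀ := B.eraseNone with hB₀def
    set C₀ := C.eraseNone with hC₀
    have hAC : (A ∪ C).eraseNone = A₀ ∪ C₀ := Finset.eraseNone_union A C
    have hAB : (A ∪ B).eraseNone = A₀ ∪ B₀ := Finset.eraseNone_union A B
    have hBC : (B ∪ C).eraseNone = B₀ ∪ C₀ := Finset.eraseNone_union B C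
    have hB₀ : none ∉ B → B₀.Nonempty := by
      intro hnB
      obtain ⟨b, hb⟩ := hB
      match b with
      | none => exact absurd hb hnB
      | some b' => exact ⟨b', Finset.mem_eraseNone.2 hb⟩
    have hmem : ∀ S T : Finset (Option ((F : Set X))), none ∈ S → none ∈ S ∪ T :=
      fun S T h => Finset.mem_union_left _ h
    have hmem' : ∀ S T : Finset (Option ((F : Set X))), none ∈ T → none ∈ S ∪ T :=
      fun S T h => Finset.mem_union_right _ h
    have hnmem : ∀ S T : Finset (Option ((F : Set X))), none ∉ S → none ∉ T →
        none ∉ S ∪ T := fun S T h1 h2 h => (Finset.mem_union.1 h).elim h1 h2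
    have hkey : ∀ P Q R : Finset ((F : Set X)), f (P ∪ R) ≤ f (P ∪ Q) + f (Q ∪ R) := by
      intro P Q R
      have h := admissible_key hf P Q R
      rwa [eS] at h
    by_cases ha : none ∈ A <;> by_cases hb : none ∈ B <;> by_cases hc : none ∈ C
    · rw [if_pos (hmem A C ha), if_pos (hmem A B ha), if_pos (hmem B C hb), hAC, hAB, hBC]
      exact hkey A₀ B₀ C₀
    · rw [if_pos (hmem A C ha), if_pos (hmem A B ha), if_pos (hmem B C hb), hAC, hAB, hBC]
      exact hkey A₀ B₀ C₀
    · rw [if_pos (hmem A C ha), if_pos (hmem A B ha), if_pos (hmem' B C hc), hAC, hAB, hBC]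
      exact hkey A₀ B₀ C₀
    · -- a, ¬b, ¬c
      rw [if_pos (hmem A C ha), if_pos (hmem A B ha), if_neg (hnmem B C hb hc),
        hAC, hAB, hBC]
      have h := hf.tri A₀ C₀ B₀ (hB₀ hb)
      rw [eS] at h
      rwa [Finset.union_comm C₀ B₀] at h
    · rw [if_pos (hmem' A C hc), if_pos (hmem' A B hb), if_pos (hmem B C hb), hAC, hAB, hBC]
      exact hkey A₀ B₀ C₀
    · rw [if_neg (hnmem A C ha hc), if_pos (hmem' A B hb), if_pos (hmem B C hb),
        hAC, hAB, hBC]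
      exact le_trans (hf.le (A₀ ∪ C₀)) (hkey A₀ B₀ C₀)
    · -- ¬a, ¬b, c
      rw [if_pos (hmem' A C hc), if_neg (hnmem A B ha hb), if_pos (hmem' B C hc),
        hAC, hAB, hBC]
      have h := hf.tri C₀ A₀ B₀ (hB₀ hb)
      rw [eS] at h
      rw [Finset.union_comm C₀ A₀, Finset.union_comm C₀ B₀] at h
      linarith
    · rw [if_neg (hnmem A C ha hc), if_neg (hnmem A B ha hb), if_neg (hnmem B C hb hc),
        hAC, hAB, hBC]
      have h := (D.restrict (F : Set X)).triangle A₀ B₀ C₀ (hB₀ hb)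
      rwa [eS] at h

end AuxStmt17

/-- A Polish diversity that is ultrahomogeneous and universal has the extension
property. -/
theorem stmt17 {X : Type u} (D : Diversity X)
    (hs : D.SeparableD) (hc : D.CompleteD)
    (huniv : ∀ (Y : Type u) (DY : Diversity Y), DY.SeparableD →
      ∃ φ : Y → X, ∀ A : Finset Y, D.δ (A.image φ) = DY.δ A)
    (hultra : D.Ultrahomogeneous) :
    D.ExtensionProp := by
  intro F f hf
  have eS : (fun (a b : ((F : Set X))) => Classical.propDecidable (a = b))
      = (inferInstance : DecidableEq ((F : Set X))) := by
    funext a b; exact Subsingleton.elim _ _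
  by_cases hdeg : ∃ a : ((F : Set X)), f {a} = 0
  · -- degenerate case: the new point coincides with a point of F
    obtain ⟨a, ha0⟩ := hdeg
    refine ⟨(a : X), fun A => ?_⟩
    have hsd : (D.restrict (F : Set X)).δ {a} = 0 :=
      ((D.restrict _).eq_zero_iff _).2 (by simp)
    have h1 := hf.tri A ∅ {a} (Finset.singleton_nonempty a)
    rw [eS] at h1
    simp only [Finset.union_empty, Finset.empty_union, hsd, add_zero] at h1
    have h2 := hf.subadd A {a}
    rw [eS] at h2
    have h3 := hf.le (A ∪ {a})
    have h4 := hf.tri ∅ (A ∪ {a}) {a} (Finset.singleton_nonempty a)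
    rw [eS] at h4
    simp only [Finset.empty_union, Finset.union_assoc, Finset.union_self] at h4
    have h5 : (D.restrict (F : Set X)).δ (A ∪ {a}) = D.δ ((A ∪ {a}).image Subtype.val) := rfl
    have h6 : (A ∪ {a}).image (Subtype.val) = insert (a : X) (A.image Subtype.val) := by
      ext y
      simp only [Finset.mem_image, Finset.mem_union, Finset.mem_singleton, Finset.mem_insert]
      constructor
      · rintro ⟨b, hb | rfl, rfl⟩
        · exact Or.inr ⟨b, hb, rfl⟩
        · exact Or.inl rfl
      · rintro (rfl | ⟨b, hb, rfl⟩)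
        · exact ⟨a, Or.inr rfl, rfl⟩
        · exact ⟨b, Or.inl hb, rfl⟩
    rw [← h6, ← h5]
    linarith
  · -- non-degenerate case
    have hpos : ∀ a : ((F : Set X)), 0 < f {a} := fun a =>
      (le_trans ((D.restrict (F : Set X)).nonneg {a}) (hf.le {a})).lt_of_ne
        (fun h => hdeg ⟨a, h.symm⟩)
    set DY := extDiv D F f hf hpos with hDY
    haveI : Finite ((F : Set X)) := F.finite_toSet.to_subtype
    have hsep : DY.SeparableD :=
      ⟨Set.univ, Set.countable_univ, fun x ε hε =>
        ⟨x, Set.mem_univ x, lt_of_eq_of_lt ((DY.eq_zero_iff _).2 (by simp)) hε⟩⟩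
    have hXne : Nonempty X := by
      obtain ⟨φ0, -⟩ := huniv PUnit
        { δ := fun _ => 0
          nonneg := fun _ => le_refl 0
          eq_zero_iff := fun A => ⟨fun _ => Finset.card_le_one.2
              (fun a _ b _ => Subsingleton.elim a b), fun _ => rfl⟩
          triangle := fun _ _ _ _ => by norm_num }
        ⟨Set.univ, Set.countable_univ, fun x ε hε => ⟨x, Set.mem_univ x, hε⟩⟩
      exact ⟨φ0 PUnit.unit⟩
    obtain ⟨φY, hφ⟩ := huniv (Option ((F : Set X))) DY hsep
    set ψ : ((F : Set X)) → X := fun a => φY (some a) with hψdef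
    have hnone : ∀ S : Finset ((F : Set X)), DY.δ (insert none (S.image some)) = f S := by
      intro S
      show (if none ∈ insert none (S.image some) then f (insert none (S.image some)).eraseNone
        else (D.restrict (F : Set X)).δ (insert none (S.image some)).eraseNone) = f S
      rw [if_pos (Finset.mem_insert_self _ _)]
      congr 1
      ext b
      simp [Finset.mem_eraseNone]
    have hsome : ∀ S : Finset ((F : Set X)),
        DY.δ (S.image some) = D.δ (S.image Subtype.val) := by
      intro S
      show (if none ∈ S.image some then f (S.image some).eraseNone
        else (D.restrict (F : Set X)).δ (S.image some).eraseNone) = D.δ (S.image Subtype.val)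
      rw [if_neg (by simp), Finset.eraseNone_image_some]
      rfl
    have hψ : ∀ B : Finset ((F : Set X)), D.δ (B.image ψ) = D.δ (B.image Subtype.val) := by
      intro B
      have h := hφ (B.image some)
      rw [Finset.image_image, hsome B] at h
      exact h
    have hinj : Function.Injective ψ := by
      intro a b hab
      by_contra hne
      have h := hψ {a, b}
      have h1 : ({a, b} : Finset ((F : Set X))).image ψ = {ψ a} := by
        rw [Finset.image_insert, Finset.image_singleton, ← hab]
        simp
      have h2 : ({a, b} : Finset ((F : Set X))).image Subtype.val = {(a : X), (b : X)} := by
        rw [Finset.image_insert, Finset.image_singleton]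
      rw [h1, h2] at h
      have h3 : D.δ {ψ a} = 0 := (D.eq_zero_iff _).2 (by simp)
      have h4 : D.δ {(a : X), (b : X)} ≠ 0 := by
        rw [Ne, D.eq_zero_iff, Finset.card_pair (Subtype.coe_injective.ne hne)]
        omega
      exact h4 (h ▸ h3)
    haveI : Fintype ((F : Set X)) := Fintype.ofFinite _
    set A' : Finset X := (Finset.univ : Finset ((F : Set X))).image ψ with hA'
    have hmemA' : ∀ a : ((F : Set X)), ψ a ∈ ((A' : Set X)) := fun a =>
      Finset.mem_coe.2 (Finset.mem_image_of_mem ψ (Finset.mem_univ a))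
    set φ' : ((F : Set X)) → ((A' : Set X)) := fun a => ⟨ψ a, hmemA' a⟩ with hφ'
    have hbij : Function.Bijective φ' := by
      constructor
      · intro a b h
        exact hinj (congrArg Subtype.val h)
      · rintro ⟨y, hy⟩
        obtain ⟨a, -, ha⟩ := Finset.mem_image.1 (Finset.mem_coe.1 hy)
        exact ⟨a, Subtype.ext ha⟩
    have hpres : ∀ B : Finset ((F : Set X)),
        D.δ (B.image (fun b => ((φ' b : X)))) = D.δ (B.image Subtype.val) := fun B => hψ B
    obtain ⟨Φ, hΦbij, hΦpres, hΦeq⟩ := hultra F A' φ' hbij hpres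
    set x := Function.invFun Φ (φY none) with hxdef
    have hx : Φ x = φY none := Function.rightInverse_invFun hΦbij.2 (φY none)
    refine ⟨x, fun A => ?_⟩
    have himg : (insert x (A.image Subtype.val)).image Φ = insert (φY none) (A.image ψ) := by
      rw [Finset.image_insert, hx, Finset.image_image]
      congr 1
      exact Finset.image_congr (fun a _ => hΦeq a)
    have himg2 : (insert none (A.image some)).image φY = insert (φY none) (A.image ψ) := by
      rw [Finset.image_insert, Finset.image_image]
      rfl
    calc D.δ (insert x (A.image Subtype.val))
        = D.δ ((insert x (A.image Subtype.val)).image Φ) := (hΦpres _).symm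
      _ = D.δ ((insert none (A.image some)).image φY) := by rw [himg, himg2]
      _ = DY.δ (insert none (A.image some)) := hφ _
      _ = f A := hnone A
end

section
/- Let (𝕌, δ_𝕌) be a Polish diversity with the extension property. Then there exist points a, b, c ∈ 𝕌 with δ_𝕌({a,b}) = δ_𝕌({a,c}) = δ_𝕌({b,c}) = 1 and δ_𝕌({a,b,c}) = 2. In particular, (𝕌, δ_𝕌) is not a diameter diversity: there is a finite subset A ⊆ 𝕌 such that δ_𝕌(A) ≠ max_{x,y ∈ A} δ_𝕌({x,y}). -/
open scoped Classical

lemma card_admissible {X : Type*} (D : Diversity X) (F : Finset X)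
    (h : ∀ A : Finset ((F : Set X)), A.Nonempty →
      D.δ (A.image Subtype.val) = (A.card : ℝ) - 1) :
    IsAdmissible (D.restrict (F : Set X)) (fun A => (A.card : ℝ)) where
  empty := by simp
  le A := by
    show D.δ (A.image Subtype.val) ≤ (A.card : ℝ)
    rcases A.eq_empty_or_nonempty with rfl | hA
    · simpa using le_of_eq ((D.eq_zero_iff (∅ : Finset X)).mpr (by simp))
    · rw [h A hA]; linarith
  tri A B C hC := by
    letI : DecidableEq ((F : Set X)) := fun a b => Classical.propDecidable (a = b)
    have hBC : (B ∪ C).Nonempty := hC.mono Finset.subset_union_right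
    show ((A ∪ B).card : ℝ) ≤ ((A ∪ C).card : ℝ) + D.δ ((B ∪ C).image Subtype.val)
    rw [h (B ∪ C) hBC]
    have h1 : (A ∪ B) ⊆ (A ∪ C) ∪ (B ∪ C) := by
      intro x hx; simp only [Finset.mem_union] at hx ⊢; tauto
    have h2 := Finset.card_le_card h1
    have h3 := Finset.card_union_add_card_inter (A ∪ C) (B ∪ C)
    have h4 : C ⊆ (A ∪ C) ∩ (B ∪ C) := by
      intro x hx; simp only [Finset.mem_inter, Finset.mem_union]; tauto
    have h5 := Finset.card_le_card h4
    have h6 : 1 ≤ C.card := hC.card_pos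
    have key : (A ∪ B).card + 1 ≤ (A ∪ C).card + (B ∪ C).card := by omega
    have key' := (Nat.cast_le (α := ℝ)).mpr key
    push_cast at key'
    linarith
  subadd A B := by
    letI : DecidableEq ((F : Set X)) := fun a b => Classical.propDecidable (a = b)
    show ((A ∪ B).card : ℝ) ≤ (A.card : ℝ) + (B.card : ℝ)
    have := (Nat.cast_le (α := ℝ)).mpr (Finset.card_union_le A B)
    push_cast at this
    linarith

/-- A Polish diversity with the extension property contains points `a, b, c` with
unit pairwise values and `δ({a,b,c}) = 2`; in particular it is not a diameter
diversity. -/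
theorem stmt19 {U : Type*} (DU : Diversity U)
    (hs : DU.SeparableD) (hc : DU.CompleteD) (he : DU.ExtensionProp) :
    (∃ a b c : U, DU.δ {a, b} = 1 ∧ DU.δ {a, c} = 1 ∧ DU.δ {b, c} = 1 ∧
      DU.δ {a, b, c} = 2) ∧
    ∃ A : Finset U, DU.δ A ≠ sSup { r : ℝ | ∃ x ∈ A, ∃ y ∈ A, r = DU.δ {x, y} } := by

  classical
  -- Step 0: U is nonempty
  obtain ⟨a0, -⟩ := he ∅ (fun A => (A.card : ℝ)) (card_admissible DU ∅ (by
    intro A hA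
    obtain ⟨x, -⟩ := hA
    exact absurd x.2 (by simp)))
  -- Step 1: get b with δ {a0, b} = 1
  have h1 : ∀ A : Finset ((({a0} : Finset U) : Set U)), A.Nonempty →
      DU.δ (A.image Subtype.val) = (A.card : ℝ) - 1 := by
    intro A hA
    have hss : ∀ x y : ((({a0} : Finset U) : Set U)), x = y := by
      rintro ⟨x, hx⟩ ⟨y, hy⟩
      simp only [Finset.coe_singleton, Set.mem_singleton_iff] at hx hy
      simp [hx, hy]
    have hc1 : A.card = 1 :=
      le_antisymm (Finset.card_le_one.mpr fun i _ j _ => hss i j) hA.card_pos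
    rw [(DU.eq_zero_iff _).mpr
      (by rw [Finset.card_image_of_injective _ Subtype.val_injective, hc1]), hc1]
    norm_num
  obtain ⟨b, hb⟩ := he {a0} (fun A => (A.card : ℝ)) (card_admissible DU {a0} h1)
  have ha0mem : a0 ∈ ((({a0} : Finset U) : Set U)) := by simp
  have hba : DU.δ {b, a0} = 1 := by
    have := hb {⟨a0, ha0mem⟩}
    simpa using this
  have hab : DU.δ {a0, b} = 1 := by rw [Finset.pair_comm]; exact hba
  have hane : a0 ≠ b := by
    intro hrw
    have : DU.δ {a0, b} = 0 := (DU.eq_zero_iff _).mpr (by simp [hrw])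
    rw [hab] at this; norm_num at this
  -- Step 2: get c with δ {a0,c} = δ {b,c} = 1 and δ {a0,b,c} = 2
  have hcard2 : ({a0, b} : Finset U).card = 2 := by
    rw [Finset.card_insert_of_notMem (by simp [hane]), Finset.card_singleton]
  have h2 : ∀ A : Finset ((({a0, b} : Finset U) : Set U)), A.Nonempty →
      DU.δ (A.image Subtype.val) = (A.card : ℝ) - 1 := by
    intro A hA
    have hsub : A.image Subtype.val ⊆ {a0, b} := by
      intro x hx
      simp only [Finset.mem_image] at hx
      obtain ⟨y, -, rfl⟩ := hx
      exact y.2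
    have hic : (A.image Subtype.val).card = A.card :=
      Finset.card_image_of_injective _ Subtype.val_injective
    have hle2 : A.card ≤ 2 := by
      have := Finset.card_le_card hsub
      omega
    have hge1 : 1 ≤ A.card := hA.card_pos
    interval_cases hAc : A.card
    · rw [(DU.eq_zero_iff _).mpr (by omega)]
      norm_num
    · have heq : A.image Subtype.val = {a0, b} :=
        Finset.eq_of_subset_of_card_le hsub (by omega)
      rw [heq, hab]
      norm_num
  obtain ⟨c, hc2⟩ := he {a0, b} (fun A => (A.card : ℝ)) (card_admissible DU {a0, b} h2)
  have hamem : a0 ∈ ((({a0, b} : Finset U) : Set U)) := by simp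
  have hbmem : b ∈ ((({a0, b} : Finset U) : Set U)) := by simp
  have hca : DU.δ {c, a0} = 1 := by simpa using hc2 {⟨a0, hamem⟩}
  have hcb : DU.δ {c, b} = 1 := by simpa using hc2 {⟨b, hbmem⟩}
  have hmkne : (⟨a0, hamem⟩ : ((({a0, b} : Finset U) : Set U))) ≠ ⟨b, hbmem⟩ := by
    simp [hane]
  have hcab : DU.δ {c, a0, b} = 2 := by
    have := hc2 {⟨a0, hamem⟩, ⟨b, hbmem⟩}
    rw [Finset.card_insert_of_notMem (by simp [hmkne]), Finset.card_singleton] at this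
    simpa using this
  have hac : DU.δ {a0, c} = 1 := by rw [Finset.pair_comm]; exact hca
  have hbc : DU.δ {b, c} = 1 := by rw [Finset.pair_comm]; exact hcb
  have habc : ({a0, b, c} : Finset U) = {c, a0, b} := by
    ext x; simp; tauto
  have habc2 : DU.δ {a0, b, c} = 2 := by rw [habc]; exact hcab
  refine ⟨⟨a0, b, c, hab, hac, hbc, habc2⟩, ⟨{a0, b, c}, ?_⟩⟩
  have hxx : ∀ x : U, DU.δ {x, x} ≤ 1 := by
    intro x
    rw [(DU.eq_zero_iff _).mpr (by simp)]
    norm_num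
  have hub : ∀ r ∈ { r : ℝ | ∃ x ∈ ({a0, b, c} : Finset U), ∃ y ∈ ({a0, b, c} : Finset U),
      r = DU.δ {x, y} }, r ≤ 1 := by
    rintro r ⟨x, hx, y, hy, rfl⟩
    simp only [Finset.mem_insert, Finset.mem_singleton] at hx hy
    have hcmm : ∀ u v : U, DU.δ {u, v} = DU.δ {v, u} := fun u v => by
      rw [Finset.pair_comm]
    rcases hx with rfl | rfl | rfl <;> rcases hy with rfl | rfl | rfl
    · exact hxx _
    · exact le_of_eq hab
    · exact le_of_eq hac
    · exact le_of_eq ((hcmm _ _).trans hab)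
    · exact hxx _
    · exact le_of_eq hbc
    · exact le_of_eq ((hcmm _ _).trans hac)
    · exact le_of_eq ((hcmm _ _).trans hbc)
    · exact hxx _
  have hne : (1 : ℝ) ∈ { r : ℝ | ∃ x ∈ ({a0, b, c} : Finset U), ∃ y ∈ ({a0, b, c} : Finset U),
      r = DU.δ {x, y} } := ⟨a0, by simp, b, by simp, hab.symm⟩
  have hsup : sSup { r : ℝ | ∃ x ∈ ({a0, b, c} : Finset U), ∃ y ∈ ({a0, b, c} : Finset U),
      r = DU.δ {x, y} } ≤ 1 := csSup_le ⟨1, hne⟩ hub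
  rw [habc2]
  intro hcontra
  rw [← hcontra] at hsup
  norm_num at hsup
end
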